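/- Let m ≥ 1 be a natural number, let β, δ > 0 be real numbers with ρ = β/δ, and let y₀ ≥ 0 be a real number. Then ∫₀^∞ δ·e^{−δt} · ( ∑_{k=0}^{∞} [ m·(1 − (1 − 1/m)^k) + (1 − 1/m)^k · y₀ ] · ((βt)^k e^{−βt} / k!) ) dt = m·ρ/(m + ρ) + (m/(m + ρ))·y₀. That is, if the collector starts a replacement cycle already holding an expected number y₀ of valid coupon types, then the expected number of valid types held at the end of the exponential(δ) cycle, under rate-β Poisson selection, equals mρ/(m+ρ) + (m/(m+ρ))·y₀. -/

import Mathlib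

open MeasureTheory Real Set
open scoped Nat

/-!
Write `q = 1 - 1/m`. The expected number of types is `m + (y₀ - m) q^k` after `k` selections, and
the probability generating function of a Poisson law of mean `x` is `E[q^N] = exp (-(1 - q) x)`,
so conditionally on the cycle length `t` the expectation is `m + (y₀ - m) exp (-β t / m)`.
Averaging over `t ~ Exp(δ)` uses the Laplace transform `E[exp (-c T)] = δ / (δ + c)`, which here
is `m / (m + ρ)`.
-/

lemma hasSum_pow_div_factorial_exp (x : ℝ) : HasSum (fun k : ℕ => x ^ k / k !) (exp x) := by
  rw [exp_eq_exp_ℝ]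
  exact NormedSpace.expSeries_div_hasSum_exp x

lemma hasSum_pow_mul_poisson (q x : ℝ) :
    HasSum (fun k : ℕ => q ^ k * (x ^ k * exp (-x) / k !)) (exp (-((1 - q) * x))) := by
  have h := (hasSum_pow_div_factorial_exp (q * x)).mul_left (exp (-x))
  rw [← exp_add, show -x + q * x = -((1 - q) * x) by ring] at h
  exact h.congr_fun fun k => by ring

lemma hasSum_affine_pow_mul_poisson (a b q x : ℝ) :
    HasSum (fun k : ℕ => (a + b * q ^ k) * (x ^ k * exp (-x) / k !))
      (a + b * exp (-((1 - q) * x))) := by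
  have hmass := hasSum_pow_mul_poisson 1 x
  rw [sub_self, zero_mul, neg_zero, exp_zero] at hmass
  have h := (hmass.mul_left a).add ((hasSum_pow_mul_poisson q x).mul_left b)
  rw [mul_one] at h
  exact h.congr_fun fun k => by ring

lemma integral_exp_neg_mul_Ioi {a : ℝ} (ha : 0 < a) :
    ∫ t in Ioi (0 : ℝ), exp (-a * t) = 1 / a := by
  rw [integral_exp_mul_Ioi (neg_neg_of_pos ha)]
  field_simp
  simp

lemma integral_exp_density_mul_affine_exp {δ c : ℝ} (hδ : 0 < δ) (hδc : 0 < δ + c) (a b : ℝ) :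
    ∫ t in Ioi (0 : ℝ), δ * exp (-δ * t) * (a + b * exp (-(c * t)))
      = a + b * (δ / (δ + c)) := by
  have hexp (r : ℝ) (hr : 0 < r) : IntegrableOn (fun t => exp (-r * t)) (Ioi 0) := by
    simpa only [neg_mul] using exp_neg_integrableOn_Ioi 0 hr
  have hsplit : (fun t => δ * exp (-δ * t) * (a + b * exp (-(c * t))))
      = fun t => a * δ * exp (-δ * t) + b * δ * exp (-(δ + c) * t) := by
    funext t
    rw [neg_add, add_mul, exp_add]
    ring_nf
  rw [hsplit, integral_add ((hexp δ hδ).const_mul _) ((hexp _ hδc).const_mul _),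
    integral_const_mul, integral_const_mul, integral_exp_neg_mul_Ioi hδ,
    integral_exp_neg_mul_Ioi hδc]
  field_simp

theorem stmt_7_general (m : ℕ) (hm : 1 ≤ m) (β δ : ℝ) (hβ : 0 < β) (hδ : 0 < δ)
    (ρ : ℝ) (hρ : ρ = β / δ) (y₀ : ℝ) :
    ∫ t in Set.Ioi (0 : ℝ),
        δ * Real.exp (-δ * t) *
          (∑' k : ℕ,
            ((m : ℝ) * (1 - (1 - 1 / (m : ℝ)) ^ k) + (1 - 1 / (m : ℝ)) ^ k * y₀) *
              ((β * t) ^ k * Real.exp (-β * t) / (Nat.factorial k)))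
      = (m : ℝ) * ρ / ((m : ℝ) + ρ) + ((m : ℝ) / ((m : ℝ) + ρ)) * y₀ := by
  have hm0 : (0 : ℝ) < m := by exact_mod_cast hm
  have hcond (t : ℝ) :
      ∑' k : ℕ, ((m : ℝ) * (1 - (1 - 1 / (m : ℝ)) ^ k) + (1 - 1 / (m : ℝ)) ^ k * y₀) *
          ((β * t) ^ k * exp (-β * t) / k !)
        = m + (y₀ - m) * exp (-(β / m * t)) := by
    have h := hasSum_affine_pow_mul_poisson (m : ℝ) (y₀ - m) (1 - 1 / m) (β * t)
    rw [show (1 - (1 - 1 / (m : ℝ))) * (β * t) = β / m * t by ring] at h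
    exact (h.congr_fun fun k => by rw [neg_mul]; ring).tsum_eq
  simp_rw [hcond]
  rw [integral_exp_density_mul_affine_exp hδ (by positivity), hρ]
  field_simp
  ring

/-- Starting a replacement cycle holding an expected number `y₀` of valid types,
the expected number held at the end of an `Exp(δ)` cycle under rate-`β` Poisson
selection from `m` types is `mρ/(m+ρ) + (m/(m+ρ)) y₀`, where `ρ = β/δ`. -/
theorem stmt_7 (m : ℕ) (hm : 1 ≤ m) (β δ : ℝ) (hβ : 0 < β) (hδ : 0 < δ)
    (ρ : ℝ) (hρ : ρ = β / δ) (y₀ : ℝ) (hy₀ : 0 ≤ y₀) :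
    ∫ t in Set.Ioi (0 : ℝ),
        δ * Real.exp (-δ * t) *
          (∑' k : ℕ,
            ((m : ℝ) * (1 - (1 - 1 / (m : ℝ)) ^ k) + (1 - 1 / (m : ℝ)) ^ k * y₀) *
              ((β * t) ^ k * Real.exp (-β * t) / (Nat.factorial k)))
      = (m : ℝ) * ρ / ((m : ℝ) + ρ) + ((m : ℝ) / ((m : ℝ) + ρ)) * y₀ :=
  stmt_7_general m hm β δ hβ hδ ρ hρ y₀
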